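/- arXiv:1511.08050 — 3 statements merged into one kernel-verified Lean document; each statement's English description precedes it below -/
import Mathlib

section
/- Let T : D → D' be a C² diffeomorphism, (E, H) a C¹ solution of the time-harmonic Maxwell system ∇×E = ik μ H, ∇×H = −ik ε E + j in D. Define E'(T(x)) = ∇T(x)^{−T} E(x), H'(T(x)) = ∇T(x)^{−T} H(x), ε' = T_*ε, μ' = T_*μ, j'(T(x)) = ∇T(x) j(x)/det ∇T(x). Then ∇'×E' = ik μ' H' and ∇'×H' = −ik ε' E' + j' in D'. -/
open Matrix

/-- Partial derivative `∂ᵢ f` of a complex-valued function on `ℝ³`. -/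
noncomputable def pdC (i : Fin 3) (f : (Fin 3 → ℝ) → ℂ) (x : Fin 3 → ℝ) : ℂ :=
  fderiv ℝ f x (Pi.single i 1)

/-- The curl `∇ × H` of a complex vector field `H : ℝ³ → ℂ³`. -/
noncomputable def curlC (H : (Fin 3 → ℝ) → Fin 3 → ℂ) (x : Fin 3 → ℝ) : Fin 3 → ℂ :=
  ![pdC 1 (fun y => H y 2) x - pdC 2 (fun y => H y 1) x,
    pdC 2 (fun y => H y 0) x - pdC 0 (fun y => H y 2) x,
    pdC 0 (fun y => H y 1) x - pdC 1 (fun y => H y 0) x]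

/-!
A vector field `F` is identified with the 1-form `F♭ = ∑ F_q dx_q`, and then `curl F = ⋆ d(F♭)`,
where `⋆` reads a 2-form off the pairs `(e₁, e₂), (e₂, e₀), (e₀, e₁)`. The relation
`E = ∇Tᵀ (E' ∘ T)` says exactly that `E♭ = T^*(E'♭)`, and `d` commutes with pull-backs (the second
derivatives of `T` drop out by symmetry), so `d(E♭) = T^* d(E'♭)`. Pulling a 2-form back by a
linear map `A` multiplies its `⋆` by `adj A` (the cofactor rule), hence
`curl E = adj ∇T · (curl E') ∘ T`, i.e. `(curl E') ∘ T = (det ∇T)⁻¹ ∇T curl E`. Substituting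
Maxwell's equations, `∇Tᵀ` cancels against its inverse and leaves the push-forward coefficients.
-/

open ContinuousAlternatingMap Filter Topology

theorem Matrix.det_map_ofReal {n : Type*} [Fintype n] [DecidableEq n] (M : Matrix n n ℝ) :
    (M.map Complex.ofReal).det = M.det :=
  (RingHom.map_det Complex.ofRealHom M).symm

theorem Matrix.smul_mul_mul_transpose_mulVec_inv_transpose {R n : Type*} [CommRing R] [Fintype n]
    [DecidableEq n] {M : Matrix n n R} (hM : IsUnit M.det) (c : R) (A : Matrix n n R)
    (v : n → R) : (c • (M * A * Mᵀ)) *ᵥ ((Mᵀ)⁻¹ *ᵥ v) = c • M *ᵥ (A *ᵥ v) := by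
  rw [smul_mulVec, mulVec_mulVec, mul_assoc, mul_nonsing_inv _ (by rwa [det_transpose]), mul_one,
    mulVec_mulVec]

section OneForm

variable {ι : Type*} [Fintype ι]

noncomputable def dxC (q : ι) : (ι → ℝ) [⋀^Fin 1]→L[ℝ] ℂ :=
  ofSubsingleton ℝ (ι → ℝ) ℂ 0 (Complex.ofRealCLM ∘L ContinuousLinearMap.proj q)

noncomputable def oneFormC (F : (ι → ℝ) → ι → ℂ) (y : ι → ℝ) : (ι → ℝ) [⋀^Fin 1]→L[ℝ] ℂ :=
  ∑ q, F y q • dxC q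

theorem oneFormC_apply (F : (ι → ℝ) → ι → ℂ) (y : ι → ℝ) (v : Fin 1 → ι → ℝ) :
    oneFormC F y v = ∑ q, F y q * v 0 q := by
  simp [oneFormC, dxC]

variable {F : (ι → ℝ) → ι → ℂ} {y : ι → ℝ}

theorem DifferentiableAt.oneFormC (hF : DifferentiableAt ℝ F y) :
    DifferentiableAt ℝ (oneFormC F) y :=
  DifferentiableAt.fun_sum fun q _ => (differentiableAt_pi.1 hF q).smul_const (dxC q)

theorem extDeriv_oneFormC_apply (hF : DifferentiableAt ℝ F y) (u v : ι → ℝ) :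
    extDeriv (oneFormC F) y ![u, v] =
      ∑ q, (fderiv ℝ F y u q * v q - fderiv ℝ F y v q * u q) := by
  have hderiv : ∀ w u : ι → ℝ,
      fderiv ℝ (fun z => oneFormC F z ![w]) y u = ∑ q, fderiv ℝ F y u q * w q := by
    intro w u
    simp only [oneFormC_apply]
    rw [fderiv_fun_sum fun q _ => (differentiableAt_pi.1 hF q).mul_const _]
    simp [fderiv_mul_const (differentiableAt_pi.1 hF _), fderiv_apply hF, mul_comm]
  have hremove : Fin.removeNth 1 ![u, v] = ![u] := by
    ext i : 1
    fin_cases i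
    rfl
  rw [extDeriv_apply hF.oneFormC]
  simp [Fin.sum_univ_two, hremove, hderiv, sub_eq_add_neg, Finset.sum_add_distrib]

end OneForm

section Pullback

variable {ι : Type*} [Fintype ι] [DecidableEq ι]

noncomputable def fderivMatrix (T : (ι → ℝ) → ι → ℝ) (y : ι → ℝ) : Matrix ι ι ℝ :=
  LinearMap.toMatrix' (fderiv ℝ T y : (ι → ℝ) →ₗ[ℝ] ι → ℝ)

noncomputable def pullbackField (T : (ι → ℝ) → ι → ℝ) (F : (ι → ℝ) → ι → ℂ) (y : ι → ℝ) :
    ι → ℂ :=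
  fun r => ∑ q, (fderiv ℝ T y (Pi.single r 1) q : ℂ) * F (T y) q

theorem pullbackField_apply (T : (ι → ℝ) → ι → ℝ) (F : (ι → ℝ) → ι → ℂ) (y : ι → ℝ) :
    pullbackField T F y = ((fderivMatrix T y).map Complex.ofReal)ᵀ *ᵥ F (T y) := by
  ext r
  simp [pullbackField, fderivMatrix, mulVec, dotProduct]

theorem oneFormC_pullbackField (T : (ι → ℝ) → ι → ℝ) (F : (ι → ℝ) → ι → ℂ) (y : ι → ℝ) :
    oneFormC (pullbackField T F) y =
      (oneFormC F (T y)).compContinuousLinearMap (fderiv ℝ T y) := by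
  ext v
  conv_rhs => rw [compContinuousLinearMap_apply, oneFormC_apply, Function.comp_apply,
    pi_eq_sum_univ' (v 0), _root_.map_sum]
  simp only [oneFormC_apply, pullbackField, Finset.sum_mul, map_smul, Finset.sum_apply,
    Pi.smul_apply, smul_eq_mul, Complex.ofReal_sum, Complex.ofReal_mul, Finset.mul_sum]
  rw [Finset.sum_comm]
  exact Finset.sum_congr rfl fun _ _ => Finset.sum_congr rfl fun _ _ => by ring

theorem extDeriv_oneFormC_of_eventuallyEq_pullbackField {T : (ι → ℝ) → ι → ℝ}
    {E F : (ι → ℝ) → ι → ℂ} {x : ι → ℝ} (hT : ContDiffAt ℝ 2 T x)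
    (hF : DifferentiableAt ℝ F (T x)) (hE : E =ᶠ[𝓝 x] pullbackField T F) :
    extDeriv (oneFormC E) x =
      (extDeriv (oneFormC F) (T x)).compContinuousLinearMap (fderiv ℝ T x) := by
  have hform : oneFormC E =ᶠ[𝓝 x]
      fun y => (oneFormC F (T y)).compContinuousLinearMap (fderiv ℝ T y) :=
    hE.mono fun y hy => by
      dsimp only
      rw [← oneFormC_pullbackField]
      simp only [oneFormC, hy]
  rw [hform.extDeriv_eq]
  exact extDeriv_pullback hF.oneFormC hT (by simp)

end Pullback

theorem ContinuousAlternatingMap.apply_two_eq_sum {ι N : Type*} [Fintype ι] [DecidableEq ι]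
    [NormedAddCommGroup N] [NormedSpace ℝ N] (β : (ι → ℝ) [⋀^Fin 2]→L[ℝ] N) (u v : ι → ℝ) :
    β ![u, v] = ∑ i, ∑ j, (u i * v j) • β ![Pi.single i 1, Pi.single j 1] := by
  have hcurry : ∀ w w' : ι → ℝ, β ![w, w'] = (β.curryLeft w).curryLeft w' ![] := fun _ _ => rfl
  simp only [hcurry]
  conv_lhs => rw [pi_eq_sum_univ' u, pi_eq_sum_univ' v]
  simp only [_root_.map_sum, map_smul, sum_apply, coe_smul, Pi.smul_apply, curryLeft_apply_apply,
    Finset.smul_sum, smul_smul]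
  rw [Finset.sum_comm]
  simp only [mul_comm]

section Curl

local notation "e" i:max => (Pi.single i 1 : Fin 3 → ℝ)

noncomputable def hodgeStar2 (β : (Fin 3 → ℝ) [⋀^Fin 2]→L[ℝ] ℂ) : Fin 3 → ℂ :=
  ![β ![e 1, e 2], β ![e 2, e 0], β ![e 0, e 1]]

theorem hodgeStar2_compContinuousLinearMap (β : (Fin 3 → ℝ) [⋀^Fin 2]→L[ℝ] ℂ)
    (A : (Fin 3 → ℝ) →L[ℝ] Fin 3 → ℝ) :
    hodgeStar2 (β.compContinuousLinearMap A) =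
      ((LinearMap.toMatrix' (A : (Fin 3 → ℝ) →ₗ[ℝ] Fin 3 → ℝ)).map Complex.ofReal).adjugate *ᵥ
        hodgeStar2 β := by
  have hdiag : ∀ i, β ![e i, e i] = 0 := fun i =>
    β.map_eq_zero_of_eq _ (i := 0) (j := 1) rfl (by decide)
  have hswap : ∀ i j, β ![e j, e i] = -β ![e i, e j] := fun i j => by
    calc β ![e j, e i] = β (![e i, e j] ∘ Equiv.swap 0 1) := by
          congr 1
          ext k : 1
          fin_cases k <;> rfl
      _ = -β ![e i, e j] := β.toAlternatingMap.map_swap _ (by decide)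
  have hcomp : ∀ i j, β.compContinuousLinearMap A ![e i, e j] =
      ∑ p, ∑ q, (A (e i) p * A (e j) q) • β ![e p, e q] := fun i j => by
    rw [compContinuousLinearMap_apply, ← β.apply_two_eq_sum]
    congr 1
    ext k : 1
    fin_cases k <;> rfl
  ext k
  fin_cases k <;>
  · simp [hodgeStar2, hcomp, Fin.sum_univ_three, adjugate_fin_three, mulVec, dotProduct, hdiag,
      hswap 0 1, hswap 0 2, hswap 1 2]
    ring

theorem curlC_eq_hodgeStar2 {F : (Fin 3 → ℝ) → Fin 3 → ℂ} {y : Fin 3 → ℝ}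
    (hF : DifferentiableAt ℝ F y) : curlC F y = hodgeStar2 (extDeriv (oneFormC F) y) := by
  ext k
  fin_cases k <;>
    simp [curlC, pdC, hodgeStar2, extDeriv_oneFormC_apply hF, fderiv_apply hF,
      Fin.sum_univ_three]

theorem curlC_of_eventuallyEq_pullbackField {T : (Fin 3 → ℝ) → Fin 3 → ℝ}
    {E F : (Fin 3 → ℝ) → Fin 3 → ℂ} {x : Fin 3 → ℝ} (hT : ContDiffAt ℝ 2 T x)
    (hE : DifferentiableAt ℝ E x) (hF : DifferentiableAt ℝ F (T x))
    (hEF : E =ᶠ[𝓝 x] pullbackField T F) :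
    curlC E x = ((fderivMatrix T x).map Complex.ofReal).adjugate *ᵥ curlC F (T x) := by
  rw [curlC_eq_hodgeStar2 hE, curlC_eq_hodgeStar2 hF,
    extDeriv_oneFormC_of_eventuallyEq_pullbackField hT hF hEF,
    hodgeStar2_compContinuousLinearMap]
  rfl

theorem curlC_pushforward {D : Set (Fin 3 → ℝ)} (hD : IsOpen D) {T : (Fin 3 → ℝ) → Fin 3 → ℝ}
    (hT : ContDiffOn ℝ 2 T D) {J : (Fin 3 → ℝ) → Matrix (Fin 3) (Fin 3) ℝ}
    (hJ : ∀ x ∈ D, J x = fderivMatrix T x) (hJdet : ∀ x ∈ D, IsUnit (J x).det)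
    {E F : (Fin 3 → ℝ) → Fin 3 → ℂ}
    (hEF : ∀ x ∈ D, F (T x) = (((J x).map Complex.ofReal)ᵀ)⁻¹ *ᵥ E x)
    {x : Fin 3 → ℝ} (hx : x ∈ D) (hE : DifferentiableAt ℝ E x)
    (hF : DifferentiableAt ℝ F (T x)) :
    curlC F (T x) = ((J x).det : ℂ)⁻¹ • (J x).map Complex.ofReal *ᵥ curlC E x := by
  have hpull : E =ᶠ[𝓝 x] pullbackField T F := by
    filter_upwards [hD.mem_nhds hx] with y hy
    have hunit : IsUnit ((J y).map Complex.ofReal)ᵀ.det := by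
      rw [det_transpose, det_map_ofReal]
      exact (hJdet y hy).map Complex.ofRealHom
    rw [pullbackField_apply, ← hJ y hy, hEF y hy, mulVec_mulVec, mul_nonsing_inv _ hunit,
      one_mulVec]
  have hcurl := curlC_of_eventuallyEq_pullbackField (hT.contDiffAt (hD.mem_nhds hx)) hE hF hpull
  rw [← hJ x hx] at hcurl
  have hdet0 : ((J x).det : ℂ) ≠ 0 := Complex.ofReal_ne_zero.2 (hJdet x hx).ne_zero
  rw [hcurl, mulVec_mulVec, mul_adjugate, det_map_ofReal, smul_mulVec, one_mulVec,
    inv_smul_smul₀ hdet0]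

end Curl

theorem stmt_15_general (D D' : Set (Fin 3 → ℝ)) (hD : IsOpen D) (hD' : IsOpen D') (k : ℝ)
    (T : (Fin 3 → ℝ) → (Fin 3 → ℝ)) (hT : Set.BijOn T D D')
    (hT2 : ContDiffOn ℝ 2 T D)
    (J : (Fin 3 → ℝ) → Matrix (Fin 3) (Fin 3) ℝ)
    (hJ : ∀ x ∈ D, ∀ i j : Fin 3, J x i j = fderiv ℝ T x (Pi.single j 1) i)
    (hJdet : ∀ x ∈ D, IsUnit (J x).det)
    (ε μ ε' μ' : (Fin 3 → ℝ) → Matrix (Fin 3) (Fin 3) ℂ)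
    (E H E' H' j j' : (Fin 3 → ℝ) → Fin 3 → ℂ)
    (hE : ContDiffOn ℝ 1 E D) (hHsm : ContDiffOn ℝ 1 H D)
    (hE' : ContDiffOn ℝ 1 E' D') (hH' : ContDiffOn ℝ 1 H' D')
    (hME : ∀ x ∈ D, curlC E x = (Complex.I * k) • (μ x).mulVec (H x))
    (hMH : ∀ x ∈ D, curlC H x = (-(Complex.I * k)) • (ε x).mulVec (E x) + j x)
    (hε' : ∀ x ∈ D, ε' (T x) =
      (((J x).det : ℂ))⁻¹ • ((J x).map Complex.ofReal * ε x * ((J x).map Complex.ofReal)ᵀ))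
    (hμ' : ∀ x ∈ D, μ' (T x) =
      (((J x).det : ℂ))⁻¹ • ((J x).map Complex.ofReal * μ x * ((J x).map Complex.ofReal)ᵀ))
    (hj' : ∀ x ∈ D, j' (T x) = (((J x).det : ℂ))⁻¹ • ((J x).map Complex.ofReal).mulVec (j x))
    (hE'def : ∀ x ∈ D, E' (T x) = ((((J x).map Complex.ofReal)ᵀ)⁻¹).mulVec (E x))
    (hH'def : ∀ x ∈ D, H' (T x) = ((((J x).map Complex.ofReal)ᵀ)⁻¹).mulVec (H x)) :
    ∀ x ∈ D,
      curlC E' (T x) = (Complex.I * k) • (μ' (T x)).mulVec (H' (T x)) ∧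
      curlC H' (T x) = (-(Complex.I * k)) • (ε' (T x)).mulVec (E' (T x)) + j' (T x) := by
  intro x hx
  have hJT : ∀ y ∈ D, J y = fderivMatrix T y := fun y hy => by
    ext i j
    exact hJ y hy i j
  have hTx : T x ∈ D' := hT.mapsTo hx
  have hcurlE' := curlC_pushforward hD hT2 hJT hJdet hE'def hx
    ((hE.contDiffAt (hD.mem_nhds hx)).differentiableAt one_ne_zero)
    ((hE'.contDiffAt (hD'.mem_nhds hTx)).differentiableAt one_ne_zero)
  have hcurlH' := curlC_pushforward hD hT2 hJT hJdet hH'def hx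
    ((hHsm.contDiffAt (hD.mem_nhds hx)).differentiableAt one_ne_zero)
    ((hH'.contDiffAt (hD'.mem_nhds hTx)).differentiableAt one_ne_zero)
  have hunit : IsUnit ((J x).map Complex.ofReal).det := by
    rw [det_map_ofReal]
    exact (hJdet x hx).map Complex.ofRealHom
  constructor
  · rw [hcurlE', hME x hx, hμ' x hx, hH'def x hx,
      smul_mul_mul_transpose_mulVec_inv_transpose hunit, mulVec_smul, smul_comm]
  · rw [hcurlH', hMH x hx, hε' x hx, hE'def x hx, hj' x hx,
      smul_mul_mul_transpose_mulVec_inv_transpose hunit, mulVec_add, mulVec_smul, smul_add,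
      smul_comm]

/-- Invariance of the time-harmonic Maxwell system under a change of variables `T`:
if `(E, H)` solves Maxwell's equations with coefficients `(ε, μ)` and source `j` in `D`,
then the push-forwards `(E', H')` solve Maxwell's equations with coefficients
`(T_*ε, T_*μ)` and source `T_*j` in `D' = T(D)`. -/
theorem stmt_15 (D D' : Set (Fin 3 → ℝ)) (hD : IsOpen D) (hD' : IsOpen D') (k : ℝ)
    (hk : 0 < k)
    (T : (Fin 3 → ℝ) → (Fin 3 → ℝ)) (hT : Set.BijOn T D D')
    (hT2 : ContDiffOn ℝ 2 T D)
    (J : (Fin 3 → ℝ) → Matrix (Fin 3) (Fin 3) ℝ)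
    (hJ : ∀ x ∈ D, ∀ i j : Fin 3, J x i j = fderiv ℝ T x (Pi.single j 1) i)
    (hJdet : ∀ x ∈ D, IsUnit (J x).det)
    (ε μ ε' μ' : (Fin 3 → ℝ) → Matrix (Fin 3) (Fin 3) ℂ)
    (E H E' H' j j' : (Fin 3 → ℝ) → Fin 3 → ℂ)
    (hE : ContDiffOn ℝ 1 E D) (hHsm : ContDiffOn ℝ 1 H D)
    (hE' : ContDiffOn ℝ 1 E' D') (hH' : ContDiffOn ℝ 1 H' D')
    (hME : ∀ x ∈ D, curlC E x = (Complex.I * k) • (μ x).mulVec (H x))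
    (hMH : ∀ x ∈ D, curlC H x = (-(Complex.I * k)) • (ε x).mulVec (E x) + j x)
    (hε' : ∀ x ∈ D, ε' (T x) =
      (((J x).det : ℂ))⁻¹ • ((J x).map Complex.ofReal * ε x * ((J x).map Complex.ofReal)ᵀ))
    (hμ' : ∀ x ∈ D, μ' (T x) =
      (((J x).det : ℂ))⁻¹ • ((J x).map Complex.ofReal * μ x * ((J x).map Complex.ofReal)ᵀ))
    (hj' : ∀ x ∈ D, j' (T x) = (((J x).det : ℂ))⁻¹ • ((J x).map Complex.ofReal).mulVec (j x))
    (hE'def : ∀ x ∈ D, E' (T x) = ((((J x).map Complex.ofReal)ᵀ)⁻¹).mulVec (E x))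
    (hH'def : ∀ x ∈ D, H' (T x) = ((((J x).map Complex.ofReal)ᵀ)⁻¹).mulVec (H x)) :
    ∀ x ∈ D,
      curlC E' (T x) = (Complex.I * k) • (μ' (T x)).mulVec (H' (T x)) ∧
      curlC H' (T x) = (-(Complex.I * k)) • (ε' (T x)).mulVec (E' (T x)) + j' (T x) :=
  stmt_15_general D D' hD hD' k T hT hT2 J hJ hJdet ε μ ε' μ' E H E' H' j j' hE hHsm hE' hH' hME hMH
    hε' hμ' hj' hE'def hH'def
end

section
/- Let m > 1, r_0 > 0, α, β > 1 with αβ − α − β = 0, r_2 = m r_0, r_3 = m^{2−1/α} r_0, F(x) = r_2^α x/|x|^α and G(x) = r_3^β x/|x|^β. If ε = μ = m·I on B_{r_1} \ B_{r_0} (with r_1 = m^{1−1/α} r_0), then (G_*F_* ε, G_*F_* μ) = (I, I) on the image G(F(B_{r_1} \ B_{r_0})) = B_{r_3} \ B_{r_2}. -/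
/-!
When `αβ = α + β` the two radial power maps compose to a homothety: the exponents of `‖x‖`
in `G (F x)` cancel and the remaining constant `r₃^β (r₂^α)^(1-β)` equals `m`, so
`G (F x) = m x`. Push-forward is functorial and the Jacobian of `G ∘ F` is `m I`, whence
`G_* F_* (m I) = (m I)_* (m I) = (m · m · m / m³) I = I`; and `‖G (F x)‖ = m ‖x‖` maps the
annulus `r₀ < ‖x‖ < r₁` onto `r₂ < ‖y‖ < r₃ = m r₁`.
-/

open Matrix Filter Topology

section RadialPower

variable {E : Type*} [NormedAddCommGroup E] [InnerProductSpace ℝ E]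

noncomputable def radialPower (c γ : ℝ) (x : E) : E := (c / ‖x‖ ^ γ) • x

theorem differentiableAt_radialPower (c γ : ℝ) {x : E} (hx : x ≠ 0) :
    DifferentiableAt ℝ (radialPower c γ) x := by
  have hx' : 0 < ‖x‖ := norm_pos_iff.mpr hx
  have hnorm : DifferentiableAt ℝ (fun y : E => ‖y‖ ^ γ) x :=
    (differentiableAt_id.norm ℝ hx).rpow_const (Or.inl hx'.ne')
  have hquot : DifferentiableAt ℝ (fun y : E => c / ‖y‖ ^ γ) x := by
    simpa only [div_eq_mul_inv] using
      (hnorm.fun_inv (Real.rpow_pos_of_pos hx' γ).ne').const_mul c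
  exact hquot.smul differentiableAt_id

theorem norm_radialPower {c : ℝ} (hc : 0 ≤ c) (γ : ℝ) {x : E} (hx : x ≠ 0) :
    ‖radialPower c γ x‖ = c * ‖x‖ ^ (1 - γ) := by
  have hx' : 0 < ‖x‖ := norm_pos_iff.mpr hx
  rw [radialPower, norm_smul, Real.norm_of_nonneg (by positivity), Real.rpow_sub hx',
    Real.rpow_one]
  ring

theorem radialPower_ne_zero {c : ℝ} (hc : c ≠ 0) (γ : ℝ) {x : E} (hx : x ≠ 0) :
    radialPower c γ x ≠ 0 := by
  have hx' : 0 < ‖x‖ := norm_pos_iff.mpr hx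
  exact smul_ne_zero (div_ne_zero hc (by positivity)) hx

theorem differentiableAt_of_eq_radialPower {Φ : E → E} {c γ : ℝ}
    (hΦ : ∀ y, y ≠ 0 → Φ y = radialPower c γ y) {x : E} (hx : x ≠ 0) :
    DifferentiableAt ℝ Φ x :=
  (differentiableAt_radialPower c γ hx).congr_of_eventuallyEq
    (by filter_upwards [eventually_ne_nhds hx] using hΦ)

theorem radialPower_radialPower {c : ℝ} (hc : 0 < c) (c' : ℝ) {γ δ : ℝ}
    (hγδ : γ * δ - γ - δ = 0) {x : E} (hx : x ≠ 0) :
    radialPower c' δ (radialPower c γ x) = (c' * c ^ (1 - δ)) • x := by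
  have hx' : 0 < ‖x‖ := norm_pos_iff.mpr hx
  have hexp : (1 - γ) * δ = -γ := by linear_combination -hγδ
  rw [radialPower, norm_radialPower hc.le γ hx, radialPower, smul_smul,
    Real.mul_rpow hc.le (by positivity), ← Real.rpow_mul hx'.le, hexp, Real.rpow_neg hx'.le,
    Real.rpow_sub hc, Real.rpow_one]
  have : ‖x‖ ^ γ ≠ 0 := by positivity
  have : c ^ δ ≠ 0 := by positivity
  field_simp

end RadialPower

section Pushforward

variable {K n : Type*} [Field K] [Fintype n] [DecidableEq n]

/-- `T_* a (T x)` for `A = ∇T(x)` and `a = a(x)`. -/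
def pushforward (A a : Matrix n n K) : Matrix n n K := A.det⁻¹ • (A * a * Aᵀ)

theorem pushforward_mul (A B a : Matrix n n K) :
    pushforward B (pushforward A a) = pushforward (B * A) a := by
  simp only [pushforward, det_mul, transpose_mul, mul_inv, Matrix.mul_smul, Matrix.smul_mul,
    smul_smul, Matrix.mul_assoc]

theorem pushforward_smul_one_smul_one {c : K} (hc : c ≠ 0) :
    pushforward (c • 1 : Matrix (Fin 3) (Fin 3) K) (c • 1) = 1 := by
  simp only [pushforward, det_smul, det_one, transpose_smul, transpose_one, Matrix.smul_mul,
    Matrix.mul_smul, Matrix.one_mul, smul_smul, Fintype.card_fin]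
  rw [show (c ^ 3 * 1)⁻¹ * (c * (c * c)) = 1 by field_simp, one_smul]

end Pushforward

section Jacobian

variable {ι : Type*} [Fintype ι] [DecidableEq ι]

theorem eq_toMatrix_basisFun (L : EuclideanSpace ℝ ι →L[ℝ] EuclideanSpace ℝ ι)
    {J : Matrix ι ι ℝ} (hJ : ∀ i j, J i j = L (EuclideanSpace.single j 1) i) :
    J = LinearMap.toMatrix (EuclideanSpace.basisFun ι ℝ).toBasis
      (EuclideanSpace.basisFun ι ℝ).toBasis L := by
  ext i j
  simp [LinearMap.toMatrix_apply, hJ]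

theorem jacobian_mul_eq_smul_one {Φ Ψ : EuclideanSpace ℝ ι → EuclideanSpace ℝ ι}
    {x : EuclideanSpace ℝ ι} {c : ℝ} (hΦ : DifferentiableAt ℝ Φ x)
    (hΨ : DifferentiableAt ℝ Ψ (Φ x)) (hΨΦ : Ψ ∘ Φ =ᶠ[𝓝 x] fun y => c • y)
    {JΦ JΨ : Matrix ι ι ℝ} (hJΦ : ∀ i j, JΦ i j = fderiv ℝ Φ x (EuclideanSpace.single j 1) i)
    (hJΨ : ∀ i j, JΨ i j = fderiv ℝ Ψ (Φ x) (EuclideanSpace.single j 1) i) :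
    JΨ * JΦ = c • 1 := by
  have hderiv : fderiv ℝ (Ψ ∘ Φ) x = c • ContinuousLinearMap.id ℝ _ :=
    (((hasFDerivAt_id x).const_smul c).congr_of_eventuallyEq hΨΦ).fderiv
  rw [eq_toMatrix_basisFun _ hJΨ, eq_toMatrix_basisFun _ hJΦ, ← LinearMap.toMatrix_comp,
    ← ContinuousLinearMap.toLinearMap_comp, ← fderiv_comp x hΨ hΦ, hderiv,
    ContinuousLinearMap.toLinearMap_smul, ContinuousLinearMap.coe_id, map_smul,
    LinearMap.toMatrix_id]

end Jacobian

theorem lens_scale_factor_eq {m r₀ α β : ℝ} (hm : 0 < m) (hr₀ : 0 < r₀) (hα : α ≠ 0)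
    (hαβ : α * β - α - β = 0) :
    (m ^ (2 - 1/α) * r₀) ^ β * ((m * r₀) ^ α) ^ (1 - β) = m := by
  have hm_exp : (2 - 1/α) * β + α * (1 - β) = 1 := by
    field_simp
    linear_combination (1 - α) * hαβ
  have hr₀_exp : β + α * (1 - β) = 0 := by linear_combination -hαβ
  calc (m ^ (2 - 1/α) * r₀) ^ β * ((m * r₀) ^ α) ^ (1 - β)
      = m ^ ((2 - 1/α) * β + α * (1 - β)) * r₀ ^ (β + α * (1 - β)) := by
        rw [Real.mul_rpow (by positivity) hr₀.le, ← Real.rpow_mul hm.le,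
          ← Real.rpow_mul (by positivity), Real.mul_rpow hm.le hr₀.le, Real.rpow_add hm,
          Real.rpow_add hr₀]
        ring
    _ = m := by rw [hm_exp, hr₀_exp, Real.rpow_one, Real.rpow_zero, mul_one]

theorem stmt_16_general (m r₀ α β r₁ r₂ r₃ : ℝ) (hm : 1 < m) (hr₀ : 0 < r₀)
    (hα : 1 < α) (hab : α * β - α - β = 0)
    (h1 : r₁ = m ^ (1 - 1/α) * r₀) (h2 : r₂ = m * r₀) (h3 : r₃ = m ^ (2 - 1/α) * r₀)
    (F G : EuclideanSpace ℝ (Fin 3) → EuclideanSpace ℝ (Fin 3))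
    (hF : ∀ x : EuclideanSpace ℝ (Fin 3), x ≠ 0 → F x = (r₂ ^ α / ‖x‖ ^ α) • x)
    (hG : ∀ y : EuclideanSpace ℝ (Fin 3), y ≠ 0 → G y = (r₃ ^ β / ‖y‖ ^ β) • y)
    (JF JG : EuclideanSpace ℝ (Fin 3) → Matrix (Fin 3) (Fin 3) ℝ)
    (hJF : ∀ x : EuclideanSpace ℝ (Fin 3), x ≠ 0 → ∀ i j : Fin 3,
      JF x i j = fderiv ℝ F x (EuclideanSpace.single j 1) i)
    (hJG : ∀ y : EuclideanSpace ℝ (Fin 3), y ≠ 0 → ∀ i j : Fin 3,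
      JG y i j = fderiv ℝ G y (EuclideanSpace.single j 1) i)
    (ε μ : EuclideanSpace ℝ (Fin 3) → Matrix (Fin 3) (Fin 3) ℝ)
    (hε : ∀ x : EuclideanSpace ℝ (Fin 3), r₀ < ‖x‖ → ‖x‖ < r₁ →
      ε x = m • (1 : Matrix (Fin 3) (Fin 3) ℝ) ∧ μ x = m • (1 : Matrix (Fin 3) (Fin 3) ℝ)) :
    ∀ x : EuclideanSpace ℝ (Fin 3), r₀ < ‖x‖ → ‖x‖ < r₁ →
      (r₂ < ‖G (F x)‖ ∧ ‖G (F x)‖ < r₃) ∧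
      ((JG (F x)).det)⁻¹ •
          (JG (F x) * (((JF x).det)⁻¹ • (JF x * ε x * (JF x)ᵀ)) * (JG (F x))ᵀ) =
        (1 : Matrix (Fin 3) (Fin 3) ℝ) ∧
      ((JG (F x)).det)⁻¹ •
          (JG (F x) * (((JF x).det)⁻¹ • (JF x * μ x * (JF x)ᵀ)) * (JG (F x))ᵀ) =
        (1 : Matrix (Fin 3) (Fin 3) ℝ) := by
  intro x hx₀ hx₁
  have hm₀ : 0 < m := by linarith
  have hx : x ≠ 0 := norm_pos_iff.mp (hr₀.trans hx₀)
  have hc : 0 < r₂ ^ α := by rw [h2]; positivity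
  have hF₀ : ∀ y, y ≠ 0 → F y ≠ 0 := fun y hy => hF y hy ▸ radialPower_ne_zero hc.ne' α hy
  have hGF : ∀ y, y ≠ 0 → G (F y) = m • y := fun y hy => calc
    G (F y) = radialPower (r₃ ^ β) β (radialPower (r₂ ^ α) α y) := by
      rw [hG _ (hF₀ y hy), hF y hy]; rfl
    _ = m • y := by
      rw [radialPower_radialPower hc _ hab hy, h2, h3,
        lens_scale_factor_eq hm₀ hr₀ (by positivity) hab]
  have hJ : JG (F x) * JF x = m • 1 :=
    jacobian_mul_eq_smul_one (differentiableAt_of_eq_radialPower hF hx)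
      (differentiableAt_of_eq_radialPower hG (hF₀ x hx))
      (by filter_upwards [eventually_ne_nhds hx] using hGF) (hJF x hx) (hJG _ (hF₀ x hx))
  have hnorm : ‖G (F x)‖ = m * ‖x‖ := by
    rw [hGF x hx, norm_smul, Real.norm_of_nonneg hm₀.le]
  have hr₃ : r₃ = m * r₁ := by
    rw [h3, h1, show 2 - 1/α = 1 + (1 - 1/α) by ring, Real.rpow_add hm₀, Real.rpow_one]
    ring
  have hpush : pushforward (JG (F x)) (pushforward (JF x) (m • 1)) = 1 := by
    rw [pushforward_mul, hJ, pushforward_smul_one_smul_one hm₀.ne']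
  obtain ⟨hεx, hμx⟩ := hε x hx₀ hx₁
  refine ⟨⟨?_, ?_⟩, by rw [hεx]; exact hpush, by rw [hμx]; exact hpush⟩
  · rw [hnorm, h2]; gcongr
  · rw [hnorm, hr₃]; gcongr

/-- For the superlensing construction, `(G_* F_* (m I), G_* F_* (m I)) = (I, I)` on
`B_{r₃} \ B_{r₂}`, the image of `B_{r₁} \ B_{r₀}` under `G ∘ F`. -/
theorem stmt_16 (m r₀ α β r₁ r₂ r₃ : ℝ) (hm : 1 < m) (hr₀ : 0 < r₀)
    (hα : 1 < α) (hβ : 1 < β) (hab : α * β - α - β = 0)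
    (h1 : r₁ = m ^ (1 - 1/α) * r₀) (h2 : r₂ = m * r₀) (h3 : r₃ = m ^ (2 - 1/α) * r₀)
    (F G : EuclideanSpace ℝ (Fin 3) → EuclideanSpace ℝ (Fin 3))
    (hF : ∀ x : EuclideanSpace ℝ (Fin 3), x ≠ 0 → F x = (r₂ ^ α / ‖x‖ ^ α) • x)
    (hG : ∀ y : EuclideanSpace ℝ (Fin 3), y ≠ 0 → G y = (r₃ ^ β / ‖y‖ ^ β) • y)
    (JF JG : EuclideanSpace ℝ (Fin 3) → Matrix (Fin 3) (Fin 3) ℝ)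
    (hJF : ∀ x : EuclideanSpace ℝ (Fin 3), x ≠ 0 → ∀ i j : Fin 3,
      JF x i j = fderiv ℝ F x (EuclideanSpace.single j 1) i)
    (hJG : ∀ y : EuclideanSpace ℝ (Fin 3), y ≠ 0 → ∀ i j : Fin 3,
      JG y i j = fderiv ℝ G y (EuclideanSpace.single j 1) i)
    (ε μ : EuclideanSpace ℝ (Fin 3) → Matrix (Fin 3) (Fin 3) ℝ)
    (hε : ∀ x : EuclideanSpace ℝ (Fin 3), r₀ < ‖x‖ → ‖x‖ < r₁ →
      ε x = m • (1 : Matrix (Fin 3) (Fin 3) ℝ) ∧ μ x = m • (1 : Matrix (Fin 3) (Fin 3) ℝ)) :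
    ∀ x : EuclideanSpace ℝ (Fin 3), r₀ < ‖x‖ → ‖x‖ < r₁ →
      (r₂ < ‖G (F x)‖ ∧ ‖G (F x)‖ < r₃) ∧
      ((JG (F x)).det)⁻¹ •
          (JG (F x) * (((JF x).det)⁻¹ • (JF x * ε x * (JF x)ᵀ)) * (JG (F x))ᵀ) =
        (1 : Matrix (Fin 3) (Fin 3) ℝ) ∧
      ((JG (F x)).det)⁻¹ •
          (JG (F x) * (((JF x).det)⁻¹ • (JF x * μ x * (JF x)ᵀ)) * (JG (F x))ᵀ) =
        (1 : Matrix (Fin 3) (Fin 3) ℝ) :=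
  stmt_16_general m r₀ α β r₁ r₂ r₃ hm hr₀ hα hab h1 h2 h3 F G hF hG JF JG hJF hJG ε μ hε
end

section
/- Let m > 1, r_0 > 0, α, β > 1 with αβ − α − β = 0, and G∘F defined on B_{r_0} by composing F(x) = r_2^α x/|x|^α and G(x) = r_3^β x/|x|^β with r_2 = m r_0, r_3 = m^{2−1/α} r_0. Then G(F(x)) = m x for all x ∈ B_{r_0} \ {0}; i.e., the composition is the dilation by factor m. -/
/-!
Both maps are radial, so `G (F x)` is a positive multiple of `x`. Since `α β = α + β`,
`‖F x‖^β = r₂^(α β) ‖x‖^(β - α β) = r₂^(α β) ‖x‖^(-α)`, and all powers of `‖x‖` cancel: the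
multiple is `r₃^β / r₂^β = m^((1 - 1/α) β)`, and `(1 - 1/α) β = 1`.
-/

section

variable {E : Type*} [NormedAddCommGroup E] [NormedSpace ℝ E]

noncomputable def radialPowerMap (a α : ℝ) (x : E) : E := (a / ‖x‖ ^ α) • x

theorem norm_radialPowerMap {a : ℝ} (ha : 0 ≤ a) (α : ℝ) (x : E) :
    ‖radialPowerMap a α x‖ = a / ‖x‖ ^ α * ‖x‖ := by
  rw [radialPowerMap, norm_smul, Real.norm_of_nonneg (by positivity)]

theorem radialPowerMap_radialPowerMap {α β a : ℝ} (hαβ : α * β = α + β) (ha : 0 < a) (b : ℝ)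
    {x : E} (hx : x ≠ 0) :
    radialPowerMap b β (radialPowerMap a α x) = (b / a ^ (β - 1)) • x := by
  have hn : 0 < ‖x‖ := norm_pos_iff.mpr hx
  have hnorm_pow : ‖radialPowerMap a α x‖ ^ β = a ^ β / ‖x‖ ^ α := by
    rw [norm_radialPowerMap ha.le, Real.mul_rpow (by positivity) hn.le,
      Real.div_rpow ha.le (by positivity), ← Real.rpow_mul hn.le, hαβ, Real.rpow_add hn]
    field_simp
  rw [radialPowerMap, hnorm_pow, radialPowerMap, smul_smul, Real.rpow_sub_one ha.ne']
  congr 1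
  field_simp

end

theorem rpow_div_rpow_sub_one_eq {m r₀ α β : ℝ} (hm : 0 < m) (hr₀ : 0 < r₀) (hα : α ≠ 0)
    (hαβ : α * β = α + β) :
    (m ^ (2 - 1 / α) * r₀) ^ β / ((m * r₀) ^ α) ^ (β - 1) = m := by
  have hexp : (2 - 1 / α) * β = β + 1 := by
    field_simp
    linarith
  rw [← Real.rpow_mul (by positivity), show α * (β - 1) = β by linarith,
    Real.mul_rpow (by positivity) hr₀.le, Real.mul_rpow hm.le hr₀.le, ← Real.rpow_mul hm.le,
    hexp, Real.rpow_add_one hm.ne']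
  field_simp

theorem stmt_17_general (m r₀ α β r₂ r₃ : ℝ) (hm : 1 < m) (hr₀ : 0 < r₀)
    (hα : 1 < α) (hab : α * β - α - β = 0)
    (h2 : r₂ = m * r₀) (h3 : r₃ = m ^ (2 - 1/α) * r₀)
    (F G : EuclideanSpace ℝ (Fin 3) → EuclideanSpace ℝ (Fin 3))
    (hF : ∀ x : EuclideanSpace ℝ (Fin 3), x ≠ 0 → F x = (r₂ ^ α / ‖x‖ ^ α) • x)
    (hG : ∀ y : EuclideanSpace ℝ (Fin 3), y ≠ 0 → G y = (r₃ ^ β / ‖y‖ ^ β) • y) :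
    ∀ x : EuclideanSpace ℝ (Fin 3), x ≠ 0 → ‖x‖ < r₀ → G (F x) = m • x := by
  intro x hx _
  have hm₀ : 0 < m := one_pos.trans hm
  have hαβ : α * β = α + β := by linarith
  have hr₂α : 0 < r₂ ^ α := by rw [h2]; positivity
  have hFx : F x = radialPowerMap (r₂ ^ α) α x := hF x hx
  have hFx₀ : F x ≠ 0 := by
    rw [hFx, radialPowerMap]
    exact smul_ne_zero (by positivity) hx
  rw [hG _ hFx₀, hFx, ← radialPowerMap, radialPowerMap_radialPowerMap hαβ hr₂α _ hx, h2, h3,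
    rpow_div_rpow_sub_one_eq hm₀ hr₀ (by linarith) hαβ]

/-- The composition `G ∘ F` of the two Kelvin-type transforms is the dilation by `m`
on `B_{r₀} \ {0}`. -/
theorem stmt_17 (m r₀ α β r₂ r₃ : ℝ) (hm : 1 < m) (hr₀ : 0 < r₀)
    (hα : 1 < α) (hβ : 1 < β) (hab : α * β - α - β = 0)
    (h2 : r₂ = m * r₀) (h3 : r₃ = m ^ (2 - 1/α) * r₀)
    (F G : EuclideanSpace ℝ (Fin 3) → EuclideanSpace ℝ (Fin 3))
    (hF : ∀ x : EuclideanSpace ℝ (Fin 3), x ≠ 0 → F x = (r₂ ^ α / ‖x‖ ^ α) • x)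
    (hG : ∀ y : EuclideanSpace ℝ (Fin 3), y ≠ 0 → G y = (r₃ ^ β / ‖y‖ ^ β) • y) :
    ∀ x : EuclideanSpace ℝ (Fin 3), x ≠ 0 → ‖x‖ < r₀ → G (F x) = m • x :=
  stmt_17_general m r₀ α β r₂ r₃ hm hr₀ hα hab h2 h3 F G hF hG
end
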